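/- arXiv:1410.8210 — 3 statements merged into one kernel-verified Lean document; each statement's English description precedes it below -/
import Mathlib

section
/- For B ∈ ℝ, the infimum over ξ ∈ ℝ and k ∈ ℕ with k < |ξ| − 1/2 of (1/2)((B + ξ)² + (2k+1)|ξ| − k(k+1)) equals (1/2)(|B| − 1/4) when |B| > 1, attained at k = 0 and ξ = (B/|B|)(1/2 − |B|); moreover the infimum over ξ ∈ ℝ of (ξ + B/2)² + (1/2)(B²/2 + 1/4) equals (1/2)(B²/2 + 1/4). -/
/-- For `B ∈ ℝ`, the infimum over `ξ ∈ ℝ` and `k ∈ ℕ` with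
`k < |ξ| − 1/2` of `(1/2)((B + ξ)² + (2k+1)|ξ| − k(k+1))` equals `(1/2)(|B| − 1/4)` when
`|B| > 1`, attained at `k = 0` and `ξ = (B/|B|)(1/2 − |B|)`; moreover the infimum over
`ξ ∈ ℝ` of `(ξ + B/2)² + (1/2)(B²/2 + 1/4)` equals `(1/2)(B²/2 + 1/4)`. -/
theorem sl2r_fiberwise_minimizations (B : ℝ) :
    (1 < |B| →
      IsLeast {v : ℝ | ∃ ξ : ℝ, ∃ k : ℕ, (k : ℝ) < |ξ| - 1/2 ∧
          v = (1/2) * ((B + ξ)^2 + (2*(k:ℝ)+1)*|ξ| - (k:ℝ)*((k:ℝ)+1))}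
        ((1/2) * (|B| - 1/4)) ∧
      (1/2) * ((B + (B/|B|) * (1/2 - |B|))^2
          + (2*(0:ℝ)+1)*|(B/|B|) * (1/2 - |B|)| - (0:ℝ)*((0:ℝ)+1))
        = (1/2) * (|B| - 1/4)) ∧
    IsLeast {v : ℝ | ∃ ξ : ℝ, v = (ξ + B/2)^2 + (1/2) * (B^2/2 + 1/4)}
      ((1/2) * (B^2/2 + 1/4)) := by
  constructor
  · intro hB
    have hB0 : B ≠ 0 := by
      intro h; rw [h] at hB; simp at hB; linarith
    have ha : |B| ≠ 0 := abs_ne_zero.mpr hB0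
    have hsq : |B|^2 = B^2 := sq_abs B
    have hx : B + (B/|B|) * (1/2 - |B|) = B / (2 * |B|) := by
      field_simp; ring
    have hx2 : (B + (B/|B|) * (1/2 - |B|))^2 = 1/4 := by
      rw [hx]; field_simp; nlinarith
    have habs : |(B/|B|) * (1/2 - |B|)| = |B| - 1/2 := by
      rw [abs_mul, abs_div, abs_abs, div_self ha, one_mul, abs_of_nonpos (by linarith),]
      ring
    have hval : (1/2) * ((B + (B/|B|) * (1/2 - |B|))^2
          + (2*(0:ℝ)+1)*|(B/|B|) * (1/2 - |B|)| - (0:ℝ)*((0:ℝ)+1))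
        = (1/2) * (|B| - 1/4) := by
      rw [hx2, habs]; ring
    refine ⟨⟨⟨(B/|B|) * (1/2 - |B|), 0, ?_, ?_⟩, ?_⟩, hval⟩
    · rw [habs]; push_cast; linarith
    · rw [hval.symm]; push_cast; ring_nf
    · rintro v ⟨ξ, k, hk, rfl⟩
      have hk0 : (0:ℝ) ≤ (k:ℝ) := Nat.cast_nonneg k
      have h1 : |B| ≤ |B+ξ| + |ξ| := by
        have := abs_add_le (B+ξ) (-ξ); simpa using this
      have h2 : |B+ξ| ≤ (B+ξ)^2 + 1/4 := by
        nlinarith [sq_nonneg (|B+ξ| - 1/2), sq_abs (B+ξ)]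
      have h3 : (0:ℝ) ≤ (k:ℝ) * (2*|ξ| - (k:ℝ) - 1) := by
        apply mul_nonneg hk0; linarith
      nlinarith
  · constructor
    · exact ⟨-B/2, by ring⟩
    · rintro v ⟨ξ, rfl⟩
      nlinarith [sq_nonneg (ξ + B/2)]
end

section
/- The function λ₀(B) = (1/2)(B² + 1/4) for |B| ≤ 7/8, (1/2)(1 + (1−|B|)²) for 7/8 < |B| ≤ 1, and (1/2)(⌊|B|⌋ + (|B| − ⌊|B|⌋)²) for |B| > 1, is continuous, has a local maximum at |B| = 7/8 followed by a strict local minimum behavior, and satisfies (1/2)(|B| − 1/4) ≤ λ₀(B) ≤ (1/2)|B| for all |B| ≥ 1. -/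
open Set

/-- The ground state energy of the magnetic Schrödinger operator on the unit sphere
bundle `S𝕳 ≃ PSL(2,ℝ)` with left-invariant magnetic potential `B α₃`, as a function of
`t = |B| ≥ 0`: it equals `(1/2)(t² + 1/4)` for `t ≤ 7/8`, `(1/2)(1 + (1−t)²)` for
`7/8 < t ≤ 1`, and `(1/2)(⌊t⌋ + (t − ⌊t⌋)²)` for `t > 1`. -/
noncomputable def lam0SH (t : ℝ) : ℝ :=
  if t ≤ 7/8 then (1/2) * (t^2 + 1/4)
  else if t ≤ 1 then (1/2) * (1 + (1-t)^2)
  else (1/2) * ((⌊t⌋ : ℝ) + (t - (⌊t⌋ : ℝ))^2)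

lemma floor_part_continuous :
    Continuous fun t : ℝ => (1/2 : ℝ) * ((⌊t⌋ : ℝ) + (t - (⌊t⌋ : ℝ))^2) := by
  have h : ∀ t : ℝ, (1/2 : ℝ) * ((⌊t⌋ : ℝ) + (t - (⌊t⌋ : ℝ))^2)
      = (1/2) * (t + ((fun x : ℝ => x^2 - x) ∘ Int.fract) t) := by
    intro t
    simp only [Function.comp, Int.fract]
    ring
  simp only [h]
  apply continuous_const.mul
  apply continuous_id.add
  exact ContinuousOn.comp_fract'' (f := fun x : ℝ => x^2 - x)
    (by fun_prop) (by norm_num)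

lemma lam0SH_cont : Continuous lam0SH := by
  have hk := floor_part_continuous
  have hm : Continuous fun t : ℝ =>
      if t ≤ 1 then (1/2 : ℝ) * (1 + (1-t)^2)
      else (1/2) * ((⌊t⌋ : ℝ) + (t - (⌊t⌋ : ℝ))^2) := by
    apply Continuous.if_le (by fun_prop) hk continuous_id continuous_const
    intro x hx
    subst hx
    norm_num
  have : Continuous fun t : ℝ =>
      if t ≤ 7/8 then (1/2 : ℝ) * (t^2 + 1/4)
      else if t ≤ 1 then (1/2) * (1 + (1-t)^2)
      else (1/2) * ((⌊t⌋ : ℝ) + (t - (⌊t⌋ : ℝ))^2) := by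
    apply Continuous.if_le (by fun_prop) hm continuous_id continuous_const
    intro x hx
    subst hx
    norm_num
  exact this

/-- The piecewise function `λ₀` is continuous on `[0,∞)`, has a local
maximum at `t = 7/8` followed by a local minimum at `t = 1`, and satisfies the two-sided
bound `(1/2)(t − 1/4) ≤ λ₀(t) ≤ (1/2)t` for all `t ≥ 1`. -/
theorem lam0SH_continuous_localExtrema_bounds :
    ContinuousOn lam0SH (Set.Ici 0) ∧
    IsLocalMax lam0SH (7/8) ∧
    IsLocalMin lam0SH 1 ∧
    ∀ t : ℝ, 1 ≤ t → (1/2) * (t - 1/4) ≤ lam0SH t ∧ lam0SH t ≤ (1/2) * t := by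
  have hval78 : lam0SH (7/8) = (1/2) * ((7/8:ℝ)^2 + 1/4) := by
    unfold lam0SH; norm_num
  have hval1 : lam0SH 1 = 1/2 := by
    unfold lam0SH; norm_num
  refine ⟨lam0SH_cont.continuousOn, ?_, ?_, ?_⟩
  · -- local max at 7/8
    filter_upwards [Ioo_mem_nhds (by norm_num : (3/4:ℝ) < 7/8) (by norm_num : (7/8:ℝ) < 1)]
      with t ht
    rw [hval78]
    unfold lam0SH
    rcases le_or_gt t (7/8) with h | h
    · rw [if_pos h]
      nlinarith [ht.1]
    · rw [if_neg (not_le.mpr h), if_pos (le_of_lt ht.2)]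
      nlinarith [ht.2]
  · -- local min at 1
    filter_upwards [Ioo_mem_nhds (by norm_num : (7/8:ℝ) < 1) (by norm_num : (1:ℝ) < 3/2)]
      with t ht
    rw [hval1]
    unfold lam0SH
    rcases le_or_gt t (7/8) with h | h
    · exact absurd ht.1 (not_lt.mpr h)
    rcases le_or_gt t 1 with h1 | h1
    · rw [if_neg (not_le.mpr h), if_pos h1]
      nlinarith [sq_nonneg (1 - t)]
    · rw [if_neg (not_le.mpr h), if_neg (not_le.mpr h1)]
      have hf : ⌊t⌋ = 1 := by
        rw [Int.floor_eq_iff]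
        push_cast
        exact ⟨le_of_lt h1, by linarith [ht.2]⟩
      rw [hf]
      push_cast
      nlinarith [sq_nonneg (t - 1)]
  · -- bounds for t ≥ 1
    intro t ht
    rcases eq_or_lt_of_le ht with h | h
    · rw [← h, hval1]; norm_num
    · unfold lam0SH
      rw [if_neg (by push_neg; linarith), if_neg (not_le.mpr h)]
      set f : ℝ := t - (⌊t⌋ : ℝ) with hfdef
      have hf0 : 0 ≤ f := sub_nonneg.mpr (Int.floor_le t)
      have hf1 : f < 1 := by
        have := Int.lt_floor_add_one t; rw [hfdef]; linarith
      have hn : ((⌊t⌋ : ℝ)) = t - f := by rw [hfdef]; ring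
      rw [hn]
      constructor
      · nlinarith [sq_nonneg (f - 1/2)]
      · nlinarith
end

section
/- Let G be a countable group acting on a measure space by measure-preserving maps, H a Hilbert space of the form L²(X), and suppose {u₁, …, u_N} is an orthonormal set such that for each γ in an infinite subgroup G' there is a unitary N×N matrix U(γ) with T_γ u_j = Σ_k U(γ)_{jk} u_k, where T_γ u = e^{i f_γ} γ* u is a unitary operator, and X has a fundamental domain F for the G'-action with Σ_{γ ∈ G'} ∫_F |γ* u|² = ‖u‖² for all u. Then N = |G'| · Σ_k ∫_F |u_k|², contradicting |G'| = ∞; hence no eigenspace invariant under all T_γ can be finite-dimensional and nonzero. -/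
/-!
Since each `U(γ)` is unitary, `Σ_j |T_γ u_j(x)|² = Σ_k |u_k(x)|²` pointwise, so for every `γ` the
row sum `Σ_j ∫_F |T_γ u_j|²` equals the same constant `c = Σ_k ∫_F |u_k|²`. Summing over `γ` and
using the tiling property, `N = Σ_j ‖u_j‖² = Σ_γ c`, which is finite only if `c = 0` because `G'`
is infinite; then `N = 0` as well.
-/

open MeasureTheory Matrix

namespace Matrix

variable {n : Type*} [Fintype n] [DecidableEq n]

theorem star_mulVec_dotProduct_mulVec_of_mem_unitaryGroup {α : Type*} [CommRing α] [StarRing α]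
    {U : Matrix n n α} (hU : U ∈ unitaryGroup n α) (w : n → α) :
    star (U *ᵥ w) ⬝ᵥ (U *ᵥ w) = star w ⬝ᵥ w := by
  rw [star_mulVec, dotProduct_mulVec, vecMul_vecMul, ← star_eq_conjTranspose,
    mem_unitaryGroup_iff'.mp hU, vecMul_one]

theorem sum_norm_sq_mulVec_of_mem_unitaryGroup {𝕜 : Type*} [RCLike 𝕜]
    {U : Matrix n n 𝕜} (hU : U ∈ unitaryGroup n 𝕜) (w : n → 𝕜) :
    ∑ i, ‖(U *ᵥ w) i‖ ^ 2 = ∑ i, ‖w i‖ ^ 2 := by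
  have h := star_mulVec_dotProduct_mulVec_of_mem_unitaryGroup hU w
  simp only [dotProduct, Pi.star_apply, RCLike.star_def, RCLike.conj_mul] at h
  exact_mod_cast h

end Matrix

section

variable {X 𝕜 : Type*} [MeasurableSpace X] {μ : Measure X} [RCLike 𝕜]

theorem integral_mul_conj_eq_integral_norm_sq (f : X → 𝕜) :
    ∫ x, f x * (starRingEnd 𝕜) (f x) ∂μ = ((∫ x, ‖f x‖ ^ 2 ∂μ : ℝ) : 𝕜) := by
  simp_rw [RCLike.mul_conj (f _)]
  exact_mod_cast integral_ofReal (𝕜 := 𝕜)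

theorem sum_integral_norm_sq_mulVec_of_mem_unitaryGroup {n : Type*} [Fintype n] [DecidableEq n]
    {U : Matrix n n 𝕜} (hU : U ∈ unitaryGroup n 𝕜) {u : n → X → 𝕜}
    (hu : ∀ k, MemLp (u k) 2 μ) :
    ∑ i, ∫ x, ‖(U *ᵥ fun k ↦ u k x) i‖ ^ 2 ∂μ = ∑ k, ∫ x, ‖u k x‖ ^ 2 ∂μ := by
  have hUu : ∀ i, MemLp (fun x ↦ (U *ᵥ fun k ↦ u k x) i) 2 μ := fun i ↦
    memLp_finsetSum _ fun k _ ↦ (hu k).const_mul (U i k)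
  rw [← integral_finsetSum _ fun i _ ↦ (hUu i).integrable_norm_pow two_ne_zero,
    ← integral_finsetSum _ fun k _ ↦ (hu k).integrable_norm_pow two_ne_zero]
  exact integral_congr_ae <| .of_forall fun x ↦ sum_norm_sq_mulVec_of_mem_unitaryGroup hU _

end

theorem eq_zero_and_sum_tsum_eq_zero_of_sum_eq_const {G ι α : Type*} [Infinite G] [Fintype ι]
    [AddCommGroup α] [TopologicalSpace α] [IsTopologicalAddGroup α] [T2Space α]
    (a : G → ι → α) {c : α} (ha : ∀ i, Summable fun γ ↦ a γ i) (hc : ∀ γ, ∑ i, a γ i = c) :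
    c = 0 ∧ ∑ i, ∑' γ, a γ i = 0 := by
  have hsum : Summable fun γ ↦ ∑ i, a γ i := summable_sum fun i _ ↦ ha i
  simp only [hc] at hsum
  have hc0 : c = 0 := (summable_const_iff c).mp hsum
  refine ⟨hc0, ?_⟩
  rw [← Summable.tsum_finsetSum fun i _ ↦ ha i]
  simp [hc, hc0]

theorem no_finite_dimensional_invariant_eigenspace_general
    {X : Type*} [MeasurableSpace X] (μ : Measure X)
    (F : Set X)
    (G : Type*) [Infinite G]
    (N : ℕ) (u : Fin N → X → ℂ)
    (hmeas : ∀ j, AEStronglyMeasurable (u j) μ)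
    (horth : ∀ j k : Fin N,
      ∫ x, u j x * (starRingEnd ℂ) (u k x) ∂μ = if j = k then 1 else 0)
    (v : G → Fin N → X → ℂ)
    (hunitary : ∀ γ : G, ∃ U : Matrix (Fin N) (Fin N) ℂ,
      U ∈ Matrix.unitaryGroup (Fin N) ℂ ∧ ∀ (j : Fin N) (x : X),
        v γ j x = ∑ k : Fin N, U j k * u k x)
    (htile : ∀ j : Fin N,
      ∑' γ : G, ∫ x in F, ‖v γ j x‖^2 ∂μ = ∫ x, ‖u j x‖^2 ∂μ) :
    (∑ k : Fin N, ∫ x in F, ‖u k x‖^2 ∂μ) = 0 ∧ N = 0 := by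
  have hnorm (j : Fin N) : ∫ x, ‖u j x‖ ^ 2 ∂μ = 1 := by
    simpa [integral_mul_conj_eq_integral_norm_sq] using horth j j
  have hL2 (j : Fin N) : MemLp (u j) 2 μ :=
    (memLp_two_iff_integrable_sq_norm (hmeas j)).2 (.of_integral_ne_zero (by simp [hnorm]))
  have hrow (γ : G) : ∑ j, ∫ x in F, ‖v γ j x‖ ^ 2 ∂μ = ∑ k, ∫ x in F, ‖u k x‖ ^ 2 ∂μ := by
    obtain ⟨U, hU, hv⟩ := hunitary γ
    simp only [hv]
    exact sum_integral_norm_sq_mulVec_of_mem_unitaryGroup hU fun k ↦ (hL2 k).restrict F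
  have hsummable (j : Fin N) : Summable fun γ ↦ ∫ x in F, ‖v γ j x‖ ^ 2 ∂μ := by
    by_contra h
    simpa [tsum_eq_zero_of_not_summable h, hnorm] using htile j
  obtain ⟨hF0, htotal⟩ := eq_zero_and_sum_tsum_eq_zero_of_sum_eq_const _ hsummable hrow
  refine ⟨hF0, ?_⟩
  simpa [htile, hnorm] using htotal

/-- Suppose `u₁, …, u_N` is an orthonormal family in `L²(X, μ)`, and
for each `γ` in an infinite (countable) index group `G'` the translated family
`v γ j = T_γ u_j` is obtained by a unitary `N×N` matrix `U(γ)`, i.e.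
`T_γ u_j = Σ_k U(γ)_{jk} u_k`, and `F ⊆ X` is a fundamental domain in the sense that
`Σ_{γ ∈ G'} ∫_F |T_γ u_j|² = ‖u_j‖²` for each `j`.  Then (counting)
`Σ_k ∫_F |u_k|² = 0` and `N = 0`: no such orthonormal family of positive finite
cardinality exists, i.e. no finite-dimensional nonzero eigenspace is invariant under
all magnetic translations. -/
theorem no_finite_dimensional_invariant_eigenspace
    {X : Type*} [MeasurableSpace X] (μ : Measure X)
    (F : Set X) (hF : MeasurableSet F)
    (G : Type*) [Countable G] [Infinite G]
    (N : ℕ) (u : Fin N → X → ℂ)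
    (hmeas : ∀ j, AEStronglyMeasurable (u j) μ)
    (horth : ∀ j k : Fin N,
      ∫ x, u j x * (starRingEnd ℂ) (u k x) ∂μ = if j = k then 1 else 0)
    (v : G → Fin N → X → ℂ)
    (hunitary : ∀ γ : G, ∃ U : Matrix (Fin N) (Fin N) ℂ,
      U ∈ Matrix.unitaryGroup (Fin N) ℂ ∧ ∀ (j : Fin N) (x : X),
        v γ j x = ∑ k : Fin N, U j k * u k x)
    (htile : ∀ j : Fin N,
      ∑' γ : G, ∫ x in F, ‖v γ j x‖^2 ∂μ = ∫ x, ‖u j x‖^2 ∂μ) :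
    (∑ k : Fin N, ∫ x in F, ‖u k x‖^2 ∂μ) = 0 ∧ N = 0 :=
  no_finite_dimensional_invariant_eigenspace_general μ F G N u hmeas horth v hunitary htile
end
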